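/- arXiv:1812.05927 — 2 statements merged into one kernel-verified Lean document; each statement's English description precedes it below -/
import Mathlib

section
/- Let γ > 1, κ > 0 and ρ̄ > 0. Then the function θ₃ : (0,∞) → ℝ defined by θ₃(ρ) = (2√(κγ)/(γ+1))·(ρ^{(γ+1)/2} − ρ̄^{(γ+1)/2}) for ρ ≤ ρ̄ (rarefaction branch) and θ₃(ρ) = √((ρ − ρ̄)·(κρ^γ − κρ̄^γ)) for ρ > ρ̄ (shock branch) is continuously differentiable on (0,∞), and its derivative at ρ̄ equals c̄ = √(κγρ̄^{γ−1}). -/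
/-! For `ρ > ρ̄` the shock branch is `(ρ - ρ̄) √s(ρ)`, where `s(ρ)` is the slope of the pressure
between `ρ̄` and `ρ`. As `s(ρ) → p'(ρ̄) = c̄²`, its right derivative at `ρ̄` is `c̄`, and its
derivative `(s + p') / (2 √s)` also tends to `c̄`. The rarefaction branch is smooth with derivative
`√(κγ) ρ^((γ-1)/2)`, which equals `c̄` at `ρ̄`, so the two branches glue to a `C¹` function. -/

open Real Set Filter Topology

theorem contDiffOn_one_of_hasDerivAt {𝕜 E : Type*} [NontriviallyNormedField 𝕜]
    [NormedAddCommGroup E] [NormedSpace 𝕜 E] {f f' : 𝕜 → E} {U : Set 𝕜} (hU : IsOpen U)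
    (hf : ∀ x ∈ U, HasDerivAt f (f' x) x) (hf' : ContinuousOn f' U) :
    ContDiffOn 𝕜 1 f U := by
  rw [contDiffOn_one_iff_derivWithin hU.uniqueDiffOn]
  refine ⟨fun x hx => (hf x hx).differentiableAt.differentiableWithinAt, hf'.congr fun x hx => ?_⟩
  exact (hf x hx).hasDerivWithinAt.derivWithin (hU.uniqueDiffWithinAt hx)

section Gluing

variable {β : Type*} {g h : ℝ → β} {a x : ℝ}

theorem ite_le_eventuallyEq_left (hx : x < a) :
    (fun y => if y ≤ a then g y else h y) =ᶠ[𝓝 x] g := by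
  filter_upwards [Iio_mem_nhds hx] with y hy
  exact if_pos hy.le

theorem ite_le_eventuallyEq_right (hx : a < x) :
    (fun y => if y ≤ a then g y else h y) =ᶠ[𝓝 x] h := by
  filter_upwards [Ioi_mem_nhds hx] with y hy
  exact if_neg (not_le.2 hy)

theorem continuousAt_ite_le [TopologicalSpace β] (hg : ContinuousWithinAt g (Iic a) a)
    (hh : Tendsto h (𝓝[>] a) (𝓝 (g a))) :
    ContinuousAt (fun x => if x ≤ a then g x else h x) a := by
  refine continuousAt_iff_continuous_left_right.2
    ⟨hg.congr (fun x hx => if_pos hx) (if_pos le_rfl), ?_⟩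
  rw [← continuousWithinAt_Ioi_iff_Ici, ContinuousWithinAt, if_pos le_rfl]
  exact hh.congr' (eventually_nhdsWithin_of_forall fun x hx => (if_neg (not_le.2 hx)).symm)

end Gluing

section GluingDeriv

variable {E : Type*} [NormedAddCommGroup E] [NormedSpace ℝ E] {g h : ℝ → E} {a : ℝ}

theorem hasDerivAt_ite_le {d : E} (hg : HasDerivWithinAt g d (Iic a) a)
    (hh : HasDerivWithinAt h d (Ioi a) a) (hgh : g a = h a) :
    HasDerivAt (fun x => if x ≤ a then g x else h x) d a := by
  have hleft : HasDerivWithinAt (fun x => if x ≤ a then g x else h x) d (Iic a) a :=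
    hg.congr (fun x hx => if_pos hx) (if_pos le_rfl)
  have hright : HasDerivWithinAt (fun x => if x ≤ a then g x else h x) d (Ici a) a :=
    hasDerivWithinAt_Ioi_iff_Ici.1 <|
      hh.congr (fun x hx => if_neg (not_le.2 hx)) (by rw [if_pos le_rfl, hgh])
  simpa only [Iic_union_Ici, hasDerivWithinAt_univ] using hleft.union hright

theorem contDiffOn_one_ite_le {g' h' : ℝ → E} {U : Set ℝ} (hU : IsOpen U)
    (hg : ∀ x ∈ U, x ≤ a → HasDerivAt g (g' x) x) (hg' : ∀ x ∈ U, x ≤ a → ContinuousAt g' x)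
    (hh : ∀ x ∈ U, a < x → HasDerivAt h (h' x) x) (hh' : ∀ x ∈ U, a < x → ContinuousAt h' x)
    (hha : HasDerivWithinAt h (g' a) (Ioi a) a) (hh'a : Tendsto h' (𝓝[>] a) (𝓝 (g' a)))
    (hgh : g a = h a) :
    ContDiffOn ℝ 1 (fun x => if x ≤ a then g x else h x) U := by
  refine contDiffOn_one_of_hasDerivAt (f' := fun x => if x ≤ a then g' x else h' x) hU
    (fun x hx => ?_) (fun x hx => ContinuousAt.continuousWithinAt ?_)
  · rcases lt_trichotomy x a with hlt | rfl | hgt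
    · simpa only [if_pos hlt.le] using
        (hg x hx hlt.le).congr_of_eventuallyEq (ite_le_eventuallyEq_left hlt)
    · simpa only [if_pos le_rfl] using
        hasDerivAt_ite_le (hg x hx le_rfl).hasDerivWithinAt hha hgh
    · simpa only [if_neg (not_le.2 hgt)] using
        (hh x hx hgt).congr_of_eventuallyEq (ite_le_eventuallyEq_right hgt)
  · rcases lt_trichotomy x a with hlt | rfl | hgt
    · exact (hg' x hx hlt.le).congr (ite_le_eventuallyEq_left hlt).symm
    · exact continuousAt_ite_le (hg' x hx le_rfl).continuousWithinAt hh'a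
    · exact (hh' x hx hgt).congr (ite_le_eventuallyEq_right hgt).symm

end GluingDeriv

section ShockBranch

variable {p : ℝ → ℝ} {a x : ℝ}

noncomputable def shockBranch (p : ℝ → ℝ) (a x : ℝ) : ℝ := √((x - a) * (p x - p a))

noncomputable def shockBranchDeriv (p p' : ℝ → ℝ) (a x : ℝ) : ℝ :=
  (p x - p a + (x - a) * p' x) / (2 * shockBranch p a x)

@[simp]
theorem shockBranch_self : shockBranch p a a = 0 := by
  simp [shockBranch]

theorem shockBranch_eq_mul_sqrt_slope (hx : a < x) :
    shockBranch p a x = (x - a) * √(slope p a x) := by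
  have hxa : 0 < x - a := sub_pos.2 hx
  rw [shockBranch, slope_def_field,
    show (x - a) * (p x - p a) = (x - a) ^ 2 * ((p x - p a) / (x - a)) by field_simp,
    sqrt_mul (sq_nonneg _), sqrt_sq hxa.le]

theorem hasDerivWithinAt_shockBranch_Ioi {d : ℝ} (hp : HasDerivWithinAt p d (Ioi a) a) :
    HasDerivWithinAt (shockBranch p a) √d (Ioi a) a := by
  rw [hasDerivWithinAt_iff_tendsto_slope' self_notMem_Ioi] at hp ⊢
  refine ((continuous_sqrt.tendsto d).comp hp).congr' <|
    eventually_nhdsWithin_of_forall fun x hx => ?_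
  have hxa : x - a ≠ 0 := sub_ne_zero.2 (ne_of_gt hx)
  rw [Function.comp_apply, slope_def_field (shockBranch p a),
    shockBranch_eq_mul_sqrt_slope hx, shockBranch_self, sub_zero, mul_div_cancel_left₀ _ hxa]

theorem hasDerivAt_shockBranch {p' : ℝ → ℝ} (hp : HasDerivAt p (p' x) x)
    (hx : 0 < (x - a) * (p x - p a)) :
    HasDerivAt (shockBranch p a) (shockBranchDeriv p p' a x) x := by
  have := (((hasDerivAt_id x).sub_const a).mul (hp.sub_const (p a))).sqrt hx.ne'
  simp only [Pi.mul_apply, id, one_mul] at this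
  exact this

theorem continuousAt_shockBranchDeriv {p' : ℝ → ℝ} (hp : ContinuousAt p x)
    (hp' : ContinuousAt p' x) (hx : 0 < (x - a) * (p x - p a)) :
    ContinuousAt (shockBranchDeriv p p' a) x := by
  refine ContinuousAt.div (by fun_prop) ?_ (mul_ne_zero two_ne_zero (sqrt_ne_zero'.2 hx))
  unfold shockBranch
  fun_prop

theorem tendsto_shockBranchDeriv_nhdsGT {p' : ℝ → ℝ} (hp : HasDerivWithinAt p (p' a) (Ioi a) a)
    (hp' : ContinuousWithinAt p' (Ioi a) a) (hpos : 0 < p' a) :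
    Tendsto (shockBranchDeriv p p' a) (𝓝[>] a) (𝓝 √(p' a)) := by
  rw [hasDerivWithinAt_iff_tendsto_slope' self_notMem_Ioi] at hp
  have hlim := (hp.add hp').div (((continuous_sqrt.tendsto _).comp hp).const_mul 2)
    (by positivity)
  rw [show (p' a + p' a) / (2 * √(p' a)) = √(p' a) by
    field_simp; rw [sq_sqrt hpos.le]; ring] at hlim
  refine hlim.congr' <| eventually_nhdsWithin_of_forall fun x hx => ?_
  have hxa : 0 < x - a := sub_pos.2 hx
  have hp_sub : p x - p a = (x - a) * slope p a x := by
    rw [slope_def_field]; field_simp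
  simp only [Pi.div_apply, Function.comp_apply, shockBranchDeriv]
  rw [shockBranch_eq_mul_sqrt_slope hx, hp_sub, ← mul_add,
    mul_left_comm, mul_div_mul_left _ _ hxa.ne']

end ShockBranch

theorem Real.sqrt_mul_rpow {a x : ℝ} (ha : 0 ≤ a) (hx : 0 ≤ x) (s : ℝ) :
    √(a * x ^ s) = √a * x ^ (s / 2) := by
  rw [sqrt_mul ha, sqrt_eq_rpow (x ^ s), ← rpow_mul hx, mul_one_div]

theorem sub_mul_sub_const_mul_rpow_pos {κ γ a x : ℝ} (hκ : 0 < κ) (hγ : 0 < γ) (ha : 0 ≤ a)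
    (hx : a < x) : 0 < (x - a) * (κ * x ^ γ - κ * a ^ γ) :=
  mul_pos (sub_pos.2 hx) (sub_pos.2 (mul_lt_mul_of_pos_left (rpow_lt_rpow ha hx hγ) hκ))

theorem hasDerivAt_rarefactionBranch {γ : ℝ} (c b : ℝ) (hγ : γ + 1 ≠ 0) {x : ℝ} (hx : x ≠ 0) :
    HasDerivAt (fun y => 2 * c / (γ + 1) * (y ^ ((γ + 1) / 2) - b))
      (c * x ^ ((γ - 1) / 2)) x := by
  have h := ((hasDerivAt_rpow_const (p := (γ + 1) / 2) (Or.inl hx)).sub_const b).const_mul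
    (2 * c / (γ + 1))
  rw [show (γ + 1) / 2 - 1 = (γ - 1) / 2 by ring] at h
  exact h.congr_deriv (by field_simp)

/-- The piecewise function θ₃ of model M3 is continuously
differentiable on (0,∞), and its derivative at ρ̄ equals the sound speed c̄. -/
theorem theta3_contDiffOn_and_deriv
    (γ κ ρbar cbar : ℝ) (hγ : 1 < γ) (hκ : 0 < κ) (hρbar : 0 < ρbar)
    (hc : cbar = Real.sqrt (κ * γ * ρbar ^ (γ - 1)))
    (θ₃ : ℝ → ℝ)
    (hθ : ∀ ρ : ℝ, θ₃ ρ =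
      if ρ ≤ ρbar then
        (2 * Real.sqrt (κ * γ) / (γ + 1)) * (ρ ^ ((γ + 1) / 2) - ρbar ^ ((γ + 1) / 2))
      else Real.sqrt ((ρ - ρbar) * (κ * ρ ^ γ - κ * ρbar ^ γ))) :
    ContDiffOn ℝ 1 θ₃ (Set.Ioi (0 : ℝ)) ∧ HasDerivAt θ₃ cbar ρbar := by
  obtain rfl : θ₃ = _ := funext hθ
  set p : ℝ → ℝ := fun x => κ * x ^ γ
  set p' : ℝ → ℝ := fun x => κ * (γ * x ^ (γ - 1))
  have hp (x : ℝ) (hx : 0 < x) : HasDerivAt p (p' x) x :=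
    (hasDerivAt_rpow_const (Or.inl hx.ne')).const_mul κ
  have hp' (x : ℝ) (hx : 0 < x) : ContinuousAt p' x :=
    (continuousAt_rpow_const x _ (Or.inl hx.ne')).const_mul γ |>.const_mul κ
  have hshock (x : ℝ) (hx : ρbar < x) : 0 < (x - ρbar) * (p x - p ρbar) :=
    sub_mul_sub_const_mul_rpow_pos hκ (by linarith) hρbar.le hx
  have hr (x : ℝ) (hx : 0 < x) := hasDerivAt_rarefactionBranch (γ := γ) (√(κ * γ))
    (ρbar ^ ((γ + 1) / 2)) (by linarith) hx.ne'
  have hcbar : cbar = √(p' ρbar) := by rw [hc, mul_assoc]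
  have hcbar' : cbar = √(κ * γ) * ρbar ^ ((γ - 1) / 2) := by
    rw [hc, Real.sqrt_mul_rpow (by positivity) hρbar.le]
  have hright : HasDerivWithinAt (shockBranch p ρbar) cbar (Ioi ρbar) ρbar :=
    hcbar ▸ hasDerivWithinAt_shockBranch_Ioi (hp ρbar hρbar).hasDerivWithinAt
  have hright' : Tendsto (shockBranchDeriv p p' ρbar) (𝓝[>] ρbar) (𝓝 cbar) :=
    hcbar ▸ tendsto_shockBranchDeriv_nhdsGT (hp ρbar hρbar).hasDerivWithinAt
      (hp' ρbar hρbar).continuousWithinAt (by positivity)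
  have hjoin : 2 * √(κ * γ) / (γ + 1) * (ρbar ^ ((γ + 1) / 2) - ρbar ^ ((γ + 1) / 2)) =
      shockBranch p ρbar ρbar := by simp
  rw [hcbar'] at hright hright' ⊢
  exact ⟨contDiffOn_one_ite_le (g' := fun x => √(κ * γ) * x ^ ((γ - 1) / 2))
    (h := shockBranch p ρbar) isOpen_Ioi (fun x hx _ => hr x hx)
    (fun x hx _ => (continuousAt_rpow_const x _ (Or.inl (ne_of_gt hx))).const_mul _)
    (fun x hx hgt => hasDerivAt_shockBranch (hp x hx) (hshock x hgt))
    (fun x hx hgt =>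
      continuousAt_shockBranchDeriv (hp x hx).continuousAt (hp' x hx) (hshock x hgt))
    hright hright' hjoin, hasDerivAt_ite_le (hr ρbar hρbar).hasDerivWithinAt hright hjoin⟩
end

section
/- Let γ > 1, p̄ > 0, ρ̄ > 0, ū ∈ ℝ, c̄ = √(γp̄/ρ̄) and μ² = (γ−1)/(γ+1). With φ and ψ the piecewise rarefaction/shock functions of the 3-Lax curve, the total enthalpy along the 3-Lax curve, h(σ) = γσ/((γ−1)φ(σ)) + (ū + ψ(σ))²/2, is differentiable at σ = p̄ with h'(p̄) = (ū + c̄)/(c̄ρ̄). -/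
/-!
Rarefaction and shock branches of the 3-Lax curve are tangent at `σ = p̄`: on both sides
`φ'(p̄) = ρ̄ / (γ p̄) = 1 / c̄²` and `ψ'(p̄) = 1 / (c̄ ρ̄)`, so `φ` and `ψ` are differentiable at `p̄`
and the chain rule gives `h'(p̄) = γ / ((γ - 1) ρ̄) - 1 / ((γ - 1) ρ̄) + ū / (c̄ ρ̄)`.
The shock branch of `ψ` has the form `(σ - p̄) g(σ)`, whose derivative at `p̄` is `g(p̄)` as soon
as `g` is continuous there.
-/

open Asymptotics Set

theorem HasDerivAt.ite_le {F : Type*} [NormedAddCommGroup F] [NormedSpace ℝ F]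
    {f g : ℝ → F} {a : ℝ} {f' : F} (hfg : f a = g a) (hf : HasDerivAt f f' a)
    (hg : HasDerivAt g f' a) : HasDerivAt (fun x => if x ≤ a then f x else g x) f' a := by
  have hleft : HasDerivWithinAt (fun x => if x ≤ a then f x else g x) f' (Iic a) a :=
    hf.hasDerivWithinAt.congr (fun x hx => if_pos hx) (if_pos le_rfl)
  have hright : HasDerivWithinAt (fun x => if x ≤ a then f x else g x) f' (Ici a) a := by
    refine hg.hasDerivWithinAt.congr (fun x hx => ?_) (by simp [hfg])
    rcases (mem_Ici.1 hx).eq_or_lt with rfl | hlt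
    · simp [hfg]
    · exact if_neg hlt.not_ge
  simpa [Iic_union_Ici] using hleft.union hright

theorem hasDerivAt_sub_mul_of_continuousAt {𝕜 : Type*} [NontriviallyNormedField 𝕜]
    {g : 𝕜 → 𝕜} {a : 𝕜} (hg : ContinuousAt g a) :
    HasDerivAt (fun x => (x - a) * g x) (g a) a := by
  refine HasDerivAt.of_isLittleO ?_
  have hsmall : (fun x => g x - g a) =o[nhds a] (fun _ => (1 : 𝕜)) :=
    (isLittleO_one_iff 𝕜).2 (tendsto_sub_nhds_zero_iff.2 hg)
  simpa [mul_sub] using (isBigO_refl (fun x => x - a) (nhds a)).mul_isLittleO hsmall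

theorem hasDerivAt_div_rpow_self {p : ℝ} (hp : p ≠ 0) (r : ℝ) :
    HasDerivAt (fun x => (x / p) ^ r) (r / p) p := by
  have h := ((hasDerivAt_id p).div_const p).rpow_const (p := r) (Or.inl (by simp [hp]))
  simpa [div_self hp, div_eq_inv_mul, mul_comm] using h

theorem hasDerivAt_mobius_self {ρ m p : ℝ} (hp : p ≠ 0) (hm : m + 1 ≠ 0) :
    HasDerivAt (fun x => ρ * (x + m * p) / (m * x + p)) (ρ * (1 - m) / ((m + 1) * p)) p := by
  have hden : m * p + p ≠ 0 := by
    rw [show m * p + p = (m + 1) * p by ring]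
    exact mul_ne_zero hm hp
  refine ((((hasDerivAt_id p).add_const (m * p)).const_mul ρ).div
    (((hasDerivAt_id p).const_mul m).add_const p) hden).congr_deriv ?_
  simp only [id_eq, mul_one]
  rw [show m * p + p = (m + 1) * p by ring]
  field_simp
  ring

section Lax3

variable {γ p ρ c μ : ℝ}

theorem lax3_mu_add_one_pos (hγ : 0 < γ) (hμ : μ = (γ - 1) / (γ + 1)) : 0 < μ + 1 := by
  rw [show μ + 1 = 2 * γ / (γ + 1) by rw [hμ]; field_simp; ring]
  positivity

theorem hasDerivAt_lax3_density (hγ : 0 < γ) (hp : 0 < p) (hμ : μ = (γ - 1) / (γ + 1)) :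
    HasDerivAt (fun σ => if σ ≤ p then ρ * (σ / p) ^ (1 / γ)
      else ρ * (σ + μ * p) / (μ * σ + p)) (ρ / (γ * p)) p := by
  have hμ1 := lax3_mu_add_one_pos hγ hμ
  have hden : μ * p + p ≠ 0 := by nlinarith
  refine HasDerivAt.ite_le ?_ ?_ ?_
  · rw [div_self hp.ne', Real.one_rpow, show p + μ * p = μ * p + p by ring,
      mul_div_assoc, div_self hden, mul_one]
  · refine ((hasDerivAt_div_rpow_self hp.ne' (1 / γ)).const_mul ρ).congr_deriv ?_
    field_simp
  · refine (hasDerivAt_mobius_self hp.ne' hμ1.ne').congr_deriv ?_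
    subst hμ
    field_simp
    rw [div_eq_iff (by linarith)]
    ring

theorem hasDerivAt_lax3_velocity (hγ : 1 < γ) (hp : 0 < p) (hρ : 0 < ρ) (hc : 0 < c)
    (hcρ : c ^ 2 * ρ = γ * p) (hμ : μ = (γ - 1) / (γ + 1)) :
    HasDerivAt (fun σ => if σ ≤ p then (2 * c / (γ - 1)) * ((σ / p) ^ ((γ - 1) / (2 * γ)) - 1)
      else (σ - p) * Real.sqrt ((1 - μ) / (ρ * (σ + μ * p)))) (1 / (c * ρ)) p := by
  have hγ1 : 0 < γ - 1 := by linarith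
  have hpμ : 0 < p + μ * p := by nlinarith [lax3_mu_add_one_pos (by linarith) hμ]
  refine HasDerivAt.ite_le (by simp [div_self hp.ne']) ?_ ?_
  · refine (((hasDerivAt_div_rpow_self hp.ne' ((γ - 1) / (2 * γ))).sub_const 1).const_mul
      (2 * c / (γ - 1))).congr_deriv ?_
    field_simp
    linear_combination hcρ
  · refine (hasDerivAt_sub_mul_of_continuousAt (a := p)
      (g := fun σ => Real.sqrt ((1 - μ) / (ρ * (σ + μ * p))))
      (by fun_prop (disch := positivity))).congr_deriv ?_
    rw [← Real.sqrt_sq (by positivity : 0 ≤ 1 / (c * ρ)), hμ]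
    congr 1
    field_simp
    linear_combination 2 * hcρ

end Lax3

/-- The total enthalpy h(σ) = γσ/((γ−1)φ(σ)) + (ū + ψ(σ))²/2 along
the 3-Lax curve of the polytropic Euler equations is differentiable at σ = p̄
with derivative (ū + c̄)/(c̄ρ̄). -/
theorem enthalpy_deriv_along_lax3
    (γ pbar ρbar ubar c μsq : ℝ) (hγ : 1 < γ) (hpbar : 0 < pbar) (hρbar : 0 < ρbar)
    (hc : c = Real.sqrt (γ * pbar / ρbar)) (hμ : μsq = (γ - 1) / (γ + 1))
    (φ ψ : ℝ → ℝ)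
    (hφ : ∀ σ : ℝ, φ σ =
      if σ ≤ pbar then ρbar * (σ / pbar) ^ (1 / γ)
      else ρbar * (σ + μsq * pbar) / (μsq * σ + pbar))
    (hψ : ∀ σ : ℝ, ψ σ =
      if σ ≤ pbar then (2 * c / (γ - 1)) * ((σ / pbar) ^ ((γ - 1) / (2 * γ)) - 1)
      else (σ - pbar) * Real.sqrt ((1 - μsq) / (ρbar * (σ + μsq * pbar)))) :
    HasDerivAt (fun σ => γ * σ / ((γ - 1) * φ σ) + (ubar + ψ σ) ^ 2 / 2)
      ((ubar + c) / (c * ρbar)) pbar := by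
  have hc0 : 0 < c := hc ▸ Real.sqrt_pos.2 (by positivity)
  have hcρ : c ^ 2 * ρbar = γ * pbar := by
    rw [hc, Real.sq_sqrt (by positivity)]
    field_simp
  have hφ' : HasDerivAt φ (ρbar / (γ * pbar)) pbar :=
    funext hφ ▸ hasDerivAt_lax3_density (by linarith) hpbar hμ
  have hψ' : HasDerivAt ψ (1 / (c * ρbar)) pbar :=
    funext hψ ▸ hasDerivAt_lax3_velocity hγ hpbar hρbar hc0 hcρ hμ
  have hφp : φ pbar = ρbar := by simp [hφ, div_self hpbar.ne']
  have hψp : ψ pbar = 0 := by simp [hψ, div_self hpbar.ne']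
  have hγ1 : 0 < γ - 1 := by linarith
  refine ((((hasDerivAt_id pbar).const_mul γ).div (hφ'.const_mul (γ - 1))
    (by rw [hφp]; positivity)).add (((hψ'.const_add ubar).pow 2).div_const 2)).congr_deriv ?_
  simp only [id_eq, hφp, hψp]
  field_simp
  norm_num
  ring
end
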